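/- arXiv:2206.00323 — 2 statements merged into one kernel-verified Lean document; each statement's English description precedes it below -/
import Mathlib

section
/- Define e₂⁺(I) = (2−I) + 2φ_H(I) for integers I ≥ 2 and e₂⁻(I) = (2−I) − 1 + φ_H(2I) for I ≥ 1, where φ_H(k) = −1/2 + ((1/2−H)k)∨(−1/2) and H ∈ (1/2,3/4). Then: (a) e₂⁺(I) = (1−2IH) ∨ (−I) for I ≥ 2; (b) e₂⁻(I) ≥ −I for all I ≥ 1; (c) e₂⁺(I) ≥ e₂⁻(I) for all I ≥ 2; (d) e₂⁺(k₁+k₂) ≤ e₂⁻(k₁) + e₂⁻(k₂) for all k₁,k₂ ≥ 1. -/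
/-- `φ_H(k) = -1/2 + max((1/2 - H)k, -1/2)`. -/
noncomputable def phiH (H : ℝ) (k : ℕ) : ℝ :=
  -(1/2) + max ((1/2 - H) * (k : ℝ)) (-(1/2))

/-- `e₂⁺(I) = (2-I) + 2φ_H(I)`. -/
noncomputable def e2p (H : ℝ) (I : ℕ) : ℝ := (2 - (I : ℝ)) + 2 * phiH H I

/-- `e₂⁻(I) = (2-I) - 1 + φ_H(2I)`. -/
noncomputable def e2m (H : ℝ) (I : ℕ) : ℝ := (2 - (I : ℝ)) - 1 + phiH H (2*I)

/-- properties of the second exponents `e₂⁺, e₂⁻`. -/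
theorem stmt7 (H : ℝ) (hH : H ∈ Set.Ioo (1/2:ℝ) (3/4)) :
    (∀ I : ℕ, 2 ≤ I → e2p H I = max (1 - 2*(I:ℝ)*H) (-(I:ℝ))) ∧
    (∀ I : ℕ, 1 ≤ I → -(I:ℝ) ≤ e2m H I) ∧
    (∀ I : ℕ, 2 ≤ I → e2m H I ≤ e2p H I) ∧
    (∀ k₁ k₂ : ℕ, 1 ≤ k₁ → 1 ≤ k₂ → e2p H (k₁ + k₂) ≤ e2m H k₁ + e2m H k₂) := by
  obtain ⟨h1, h2⟩ := hH
  refine ⟨?_, ?_, ?_, ?_⟩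
  · intro I hI
    have hI' : (2:ℝ) ≤ (I:ℝ) := by exact_mod_cast hI
    unfold e2p phiH
    rcases le_total ((1/2 - H) * (I:ℝ)) (-(1/2)) with h | h
    · rw [max_eq_right h, max_eq_right (by nlinarith : (1 - 2*(I:ℝ)*H) ≤ -(I:ℝ))]
      ring
    · rw [max_eq_left h, max_eq_left (by nlinarith : (-(I:ℝ)) ≤ 1 - 2*(I:ℝ)*H)]
      ring
  · intro I hI
    unfold e2m phiH
    have := le_max_right ((1/2 - H) * ((2*I : ℕ):ℝ)) (-(1/2))
    push_cast at *
    linarith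
  · intro I hI
    unfold e2p e2m phiH
    push_cast
    have hr : (1/2 - H) * (2*(I:ℝ)) = 2*((1/2 - H) * (I:ℝ)) := by ring
    rcases le_total ((1/2 - H) * (2*(I:ℝ))) (-(1/2)) with h | h
    · rw [max_eq_right h]
      have := le_max_right ((1/2 - H) * (I:ℝ)) (-(1/2))
      linarith
    · rw [max_eq_left h]
      have := le_max_left ((1/2 - H) * (I:ℝ)) (-(1/2))
      linarith
  · intro k₁ k₂ hk₁ hk₂
    unfold e2p e2m phiH
    push_cast
    have a1 := le_max_left ((1/2 - H) * (2*(k₁:ℝ))) (-(1/2):ℝ)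
    have b1 := le_max_right ((1/2 - H) * (2*(k₁:ℝ))) (-(1/2):ℝ)
    have a2 := le_max_left ((1/2 - H) * (2*(k₂:ℝ))) (-(1/2):ℝ)
    have b2 := le_max_right ((1/2 - H) * (2*(k₂:ℝ))) (-(1/2):ℝ)
    rcases max_cases ((1/2 - H) * ((k₁:ℝ)+(k₂:ℝ))) (-(1/2):ℝ) with ⟨he, _⟩ | ⟨he, _⟩ <;>
      rw [he] <;> nlinarith
end

section
/- Let (G^{(γ)})_{γ∈Γ} be a disjoint family of connected edge-vertex-weighted graphs and G^{σ,τ} = ⟨σ⟩⟪τ⟫(⋁_γ G^{(γ)}) be well-defined and connected. Then s(G^{σ,τ}) = Σ_{γ∈Γ} s(G^{(γ)}) + Σ_{v∈V} σ(v) − 2(|Γ| − 1), where s(G) = 2(θ̄(G) − (I(G) − 1)) + q̄(G), I(G) = |V(G)|. -/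
open scoped Classical

/-- Total weight of a function on the off-diagonal unordered pairs of vertices,
i.e. `θ̄(G) = Σ_{[v,v']∈p(V)} θ([v,v'])`. -/
noncomputable def edgeTotal {W : Type*} [Fintype W] (f : Sym2 W → ℤ) : ℤ :=
  ∑ e ∈ Finset.univ.filter (fun e : Sym2 W => ¬ e.IsDiag), f e

/-- `τ_v = Σ_{v'≠v} τ([v,v'])`. -/
noncomputable def tauAt {W : Type*} [Fintype W] [DecidableEq W]
    (τ : Sym2 W → ℤ) (w : W) : ℤ :=
  ∑ w' ∈ Finset.univ.erase w, τ s(w, w')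

/-- `s(G) = 2(θ̄(G) − (I(G)−1)) + q̄(G)` for a weighted graph on vertex type `W`. -/
noncomputable def sExp (W : Type*) [Fintype W] (θ : Sym2 W → ℤ) (q : W → ℤ) : ℤ :=
  2 * (edgeTotal θ - ((Fintype.card W : ℤ) - 1)) + ∑ w, q w

lemma sum_pairs_aux {W : Type*} [Fintype W] [LinearOrder W] (f : Sym2 W → ℤ) :
    ∑ w : W, ∑ w' ∈ Finset.univ.erase w, f s(w, w') =
      2 * ∑ e ∈ Finset.univ.filter (fun e : Sym2 W => ¬ e.IsDiag), f e := by
  have hA : ∑ e ∈ Finset.univ.filter (fun e : Sym2 W => ¬ e.IsDiag), f e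
      = ∑ w : W, ∑ w' ∈ Finset.univ.filter (fun w' => w < w'), f s(w, w') := by
    have h := Finset.sum_sym2_filter_not_isDiag (Finset.univ : Finset W) f
    rw [Finset.sym2_univ] at h
    rw [h, show (Finset.univ : Finset W).offDiag = (Finset.univ ×ˢ Finset.univ).filter (fun a : W × W => a.1 ≠ a.2) by ext; simp [Finset.mem_offDiag], Finset.filter_filter]
    simp only [Finset.sum_filter, Finset.univ_product_univ, Fintype.sum_prod_type]
    refine Finset.sum_congr rfl fun x _ => Finset.sum_congr rfl fun y _ => ?_
    by_cases hxy : x < y <;> simp [hxy, ne_of_lt]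
  have hB : ∑ w : W, ∑ w' ∈ Finset.univ.filter (fun w' => w' < w), f s(w, w')
      = ∑ w : W, ∑ w' ∈ Finset.univ.filter (fun w' => w < w'), f s(w, w') := by
    simp only [Finset.sum_filter]
    rw [Finset.sum_comm]
    refine Finset.sum_congr rfl fun x _ => Finset.sum_congr rfl fun y _ => ?_
    rw [Sym2.eq_swap]
  have hsplit : ∀ w : W, Finset.univ.erase w =
      Finset.univ.filter (fun w' => w < w') ∪ Finset.univ.filter (fun w' => w' < w) := by
    intro w
    ext w'
    simp only [Finset.mem_erase, Finset.mem_union, Finset.mem_filter, Finset.mem_univ,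
      true_and, and_true, ne_iff_lt_or_gt]
    tauto
  have hdisj : ∀ w : W, Disjoint (Finset.univ.filter (fun w' => w < w'))
      (Finset.univ.filter (fun w' : W => w' < w)) := by
    intro w
    simp only [Finset.disjoint_filter]
    intro x _ h1 h2
    exact absurd h1 (not_lt_of_gt h2)
  calc ∑ w : W, ∑ w' ∈ Finset.univ.erase w, f s(w, w')
      = ∑ w : W, (∑ w' ∈ Finset.univ.filter (fun w' => w < w'), f s(w, w')
          + ∑ w' ∈ Finset.univ.filter (fun w' => w' < w), f s(w, w')) := by
        refine Finset.sum_congr rfl fun w _ => ?_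
        rw [hsplit w, Finset.sum_union (hdisj w)]
    _ = 2 * ∑ e ∈ Finset.univ.filter (fun e : Sym2 W => ¬ e.IsDiag), f e := by
        rw [Finset.sum_add_distrib, hB, ← hA]; ring

set_option linter.unnecessarySeqFocus false in
lemma sum_pairs {W : Type*} [Fintype W] [DecidableEq W] (f : Sym2 W → ℤ) :
    ∑ w : W, ∑ w' ∈ Finset.univ.erase w, f s(w, w') = 2 * edgeTotal f := by
  letI : LinearOrder W := IsWellOrder.linearOrder WellOrderingRel
  rw [edgeTotal]
  convert sum_pairs_aux f using 2 <;> congr <;> exact Subsingleton.elim _ _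

lemma sum_pairs_sigma {Γ : Type*} [Fintype Γ] [DecidableEq Γ]
    {V : Γ → Type*} [∀ γ, Fintype (V γ)] [∀ γ, DecidableEq (V γ)]
    (θ : ∀ γ, Sym2 (V γ) → ℤ)
    (θW : Sym2 (Σ γ, V γ) → ℤ)
    (hθWsame : ∀ γ (v v' : V γ), θW s(⟨γ, v⟩, ⟨γ, v'⟩) = θ γ s(v, v'))
    (hθWcross : ∀ γ γ' (v : V γ) (v' : V γ'), γ ≠ γ' → θW s(⟨γ, v⟩, ⟨γ', v'⟩) = 0) :
    ∑ w : Σ γ, V γ, ∑ w' ∈ Finset.univ.erase w, θW s(w, w')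
      = ∑ γ, 2 * edgeTotal (θ γ) := by
  rw [← Finset.univ_sigma_univ, Finset.sum_sigma]
  refine Finset.sum_congr rfl fun γ _ => ?_
  rw [← sum_pairs (θ γ)]
  refine Finset.sum_congr rfl fun v _ => ?_
  symm
  calc ∑ v' ∈ Finset.univ.erase v, θ γ s(v, v')
      = ∑ v' ∈ Finset.univ.erase v, θW s(⟨γ, v⟩, ⟨γ, v'⟩) :=
        Finset.sum_congr rfl fun v' _ => (hθWsame γ v v').symm
    _ = ∑ w' ∈ (Finset.univ.erase v).image (Sigma.mk γ), θW s(⟨γ, v⟩, w') := by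
        rw [Finset.sum_image (fun a _ b _ h => sigma_mk_injective h)]
    _ = ∑ w' ∈ (Finset.univ.sigma fun _ => Finset.univ).erase ⟨γ, v⟩, θW s(⟨γ, v⟩, w') := by
        apply Finset.sum_subset
        · intro w' hw'
          simp only [Finset.mem_image, Finset.mem_erase, Finset.mem_univ, and_true,
            Finset.mem_sigma, Finset.univ_sigma_univ] at hw' ⊢
          obtain ⟨v', hv', rfl⟩ := hw'
          simpa using hv'
        · rintro ⟨γ', v'⟩ hw' hnot
          by_cases hγ : γ' = γ
          · subst hγ
            exfalso
            apply hnot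
            simp only [Finset.mem_erase, Finset.univ_sigma_univ] at hw'
            simp only [Finset.mem_image, Finset.mem_erase, Finset.mem_univ, and_true]
            exact ⟨v', by simpa using hw', rfl⟩
          · exact hθWcross γ γ' v v' (Ne.symm hγ)

/-- if each `G^{(γ)}` is connected and `G^{σ,τ} = ⟨σ⟩⟪τ⟫(⋁_γ G^{(γ)})`
is well-defined and connected, then
`s(G^{σ,τ}) = Σ_γ s(G^{(γ)}) + Σ_v σ(v) − 2(|Γ|−1)`. -/
theorem stmt10 {Γ : Type*} [Fintype Γ] [DecidableEq Γ]
    {V : Γ → Type*} [∀ γ, Fintype (V γ)] [∀ γ, DecidableEq (V γ)]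
    (θ : ∀ γ, Sym2 (V γ) → ℤ) (q : ∀ γ, V γ → ℤ)
    (hθ : ∀ γ e, 0 ≤ θ γ e) (hq : ∀ γ v, 0 ≤ q γ v)
    (θW : Sym2 (Σ γ, V γ) → ℤ) (qW : (Σ γ, V γ) → ℤ)
    (hθWsame : ∀ γ (v v' : V γ), θW s(⟨γ, v⟩, ⟨γ, v'⟩) = θ γ s(v, v'))
    (hθWcross : ∀ γ γ' (v : V γ) (v' : V γ'), γ ≠ γ' → θW s(⟨γ, v⟩, ⟨γ', v'⟩) = 0)
    (hqW : ∀ γ (v : V γ), qW ⟨γ, v⟩ = q γ v)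
    (σ : (Σ γ, V γ) → ℤ) (τ : Sym2 (Σ γ, V γ) → ℤ)
    (hσ : ∀ w, σ w ≤ 0) (hτ : ∀ e, 0 ≤ τ e)
    (hτq : ∀ w, tauAt τ w ≤ qW w)
    (hwell : ∀ w, 0 ≤ qW w + σ w - tauAt τ w)
    (hconn : ∀ γ, (SimpleGraph.fromRel fun v v' : V γ => 0 < θ γ s(v, v')).Connected)
    (hconnW : (SimpleGraph.fromRel
        fun w w' : Σ γ, V γ => 0 < θW s(w, w') + τ s(w, w')).Connected) :
    sExp (Σ γ, V γ) (fun e => θW e + τ e) (fun w => qW w + σ w - tauAt τ w)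
      = (∑ γ, sExp (V γ) (θ γ) (q γ)) + (∑ w : Σ γ, V γ, σ w)
        - 2 * ((Fintype.card Γ : ℤ) - 1) := by
  -- the combined edge weight, doubled
  have hE : 2 * edgeTotal (fun e => θW e + τ e)
      = (∑ γ, 2 * edgeTotal (θ γ)) + ∑ w : Σ γ, V γ, tauAt τ w := by
    rw [← sum_pairs]
    have : ∀ w : Σ γ, V γ, ∑ w' ∈ Finset.univ.erase w, (θW s(w, w') + τ s(w, w'))
        = (∑ w' ∈ Finset.univ.erase w, θW s(w, w')) + tauAt τ w := fun w =>
      Finset.sum_add_distrib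
    simp only [this]
    rw [Finset.sum_add_distrib, sum_pairs_sigma θ θW hθWsame hθWcross]
  -- the vertex weight sum
  have hQ : ∑ w : Σ γ, V γ, (qW w + σ w - tauAt τ w)
      = (∑ γ, ∑ v, q γ v) + (∑ w : Σ γ, V γ, σ w) - ∑ w : Σ γ, V γ, tauAt τ w := by
    rw [Finset.sum_sub_distrib, Finset.sum_add_distrib]
    congr 2
    rw [← Finset.univ_sigma_univ, Finset.sum_sigma]
    exact Finset.sum_congr rfl fun γ _ => Finset.sum_congr rfl fun v _ => hqW γ v
  -- cardinality
  have hN : (Fintype.card (Σ γ, V γ) : ℤ) = ∑ γ, (Fintype.card (V γ) : ℤ) := by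
    rw [Fintype.card_sigma]
    push_cast
    rfl
  -- expand the RHS sum
  have hR : ∑ γ, sExp (V γ) (θ γ) (q γ)
      = (∑ γ, 2 * edgeTotal (θ γ)) - 2 * (∑ γ, (Fintype.card (V γ) : ℤ))
        + 2 * (Fintype.card Γ : ℤ) + ∑ γ, ∑ v, q γ v := by
    have key : ∀ γ, sExp (V γ) (θ γ) (q γ)
        = (2 * edgeTotal (θ γ) - 2 * ((Fintype.card (V γ) : ℤ)) + 2) + ∑ v, q γ v := by
      intro γ; simp only [sExp]; ring
    simp only [key]
    rw [Finset.sum_add_distrib, Finset.sum_add_distrib, Finset.sum_sub_distrib,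
      Finset.sum_const, Finset.card_univ, ← Finset.mul_sum, nsmul_eq_mul]
    simp only [Finset.mul_sum, Finset.sum_mul]
    ring
  simp only [sExp] at hR ⊢
  rw [hQ]
  linarith [hE, hN, hR]
end
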